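/- For a simple connected graph G on n ≥ 3 vertices with normalized Laplacian eigenvalues λ_1 ≥ ... ≥ λ_{n-1} > λ_n = 0, and any θ with λ_1 ≥ θ and n/(n-1) ≤ θ: if 0 < α < 1 then ∑_{i=1}^{n-1} λ_i^α ≤ θ^α + (n-θ)^α/(n-2)^{α-1}. -/

import Mathlib

open Matrix Finset

/-- The normalized Laplacian `D^{-1/2} (D - A) D^{-1/2}` of a simple graph. -/
noncomputable def normLap {n : ℕ} (G : SimpleGraph (Fin n)) [DecidableRel G.Adj] :
    Matrix (Fin n) (Fin n) ℝ :=
  let Dinvhalf : Matrix (Fin n) (Fin n) ℝ :=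
    Matrix.diagonal fun i => (Real.sqrt (G.degree i))⁻¹
  Dinvhalf * (Matrix.diagonal (fun i => (G.degree i : ℝ)) - G.adjMatrix ℝ) * Dinvhalf

/-!
The eigenvalues sum to the trace of the normalized Laplacian, which is `n` because every diagonal
entry is `1`. With `x = λ_1` the other `n - 2` nonzero eigenvalues sum to `n - x`, so by concavity
of `t ↦ t ^ α` their `α`-th powers sum to at most `(n - 2) ((n - x) / (n - 2)) ^ α`. Comparing the
tangent slopes of `t ^ α` at `x` and at `(n - x) / (n - 2)` shows that
`x ^ α + (n - 2) ((n - x) / (n - 2)) ^ α` is nonincreasing as long as `(n - x) / (n - 2) ≤ x`,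
i.e. `x ≥ n / (n - 1)`, so it may be evaluated at `θ` instead of `λ_1`.
-/

lemma normLap_apply_self {n : ℕ} {G : SimpleGraph (Fin n)} [DecidableRel G.Adj] {v : Fin n}
    (hv : 0 < G.degree v) : normLap G v v = 1 := by
  have hd : (0 : ℝ) < G.degree v := by exact_mod_cast hv
  simp only [normLap, mul_diagonal, diagonal_mul, Matrix.sub_apply, diagonal_apply_eq,
    SimpleGraph.adjMatrix_apply, G.irrefl, if_false, sub_zero]
  rw [mul_right_comm, ← mul_inv, Real.mul_self_sqrt hd.le, inv_mul_cancel₀ hd.ne']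

lemma trace_normLap {n : ℕ} {G : SimpleGraph (Fin n)} [DecidableRel G.Adj]
    (hdeg : ∀ v, 0 < G.degree v) : (normLap G).trace = n := by
  simp [trace, normLap_apply_self (hdeg _)]

lemma sum_eigenvalues_normLap {n : ℕ} (hn : 2 ≤ n) {G : SimpleGraph (Fin n)}
    [DecidableRel G.Adj] (hG : G.Preconnected) (hH : (normLap G).IsHermitian) :
    ∑ i, hH.eigenvalues i = n := by
  have : Nontrivial (Fin n) := Fin.nontrivial_iff_two_le.mpr hn
  rw [← trace_normLap fun v => hG.degree_pos_of_nontrivial v]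
  simpa using hH.trace_eq_sum_eigenvalues.symm

lemma rpow_le_tangent {a b α : ℝ} (ha : 0 < a) (hb : 0 ≤ b) (hα₀ : 0 ≤ α) (hα₁ : α ≤ 1) :
    b ^ α ≤ a ^ α + α * a ^ (α - 1) * (b - a) := by
  have hb' : -1 ≤ (b - a) / a := by rw [le_div_iff₀ ha]; linarith
  have h := rpow_one_add_le_one_add_mul_self hb' hα₀ hα₁
  rw [show 1 + (b - a) / a = b / a by field_simp; ring, Real.div_rpow hb ha.le,
    div_le_iff₀ (by positivity)] at h
  calc b ^ α ≤ (1 + α * ((b - a) / a)) * a ^ α := h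
    _ = a ^ α + α * (a ^ α / a) * (b - a) := by field_simp
    _ = a ^ α + α * a ^ (α - 1) * (b - a) := by rw [Real.rpow_sub_one ha.ne']

lemma sum_rpow_le_card_mul_mean_rpow {ι : Type*} (s : Finset ι) {f : ι → ℝ}
    (hf : ∀ i ∈ s, 0 ≤ f i) {α : ℝ} (hα₀ : 0 ≤ α) (hα₁ : α ≤ 1) :
    ∑ i ∈ s, f i ^ α ≤ #s * ((∑ i ∈ s, f i) / #s) ^ α := by
  rcases s.eq_empty_or_nonempty with rfl | hs
  · simp
  have hcard : (0 : ℝ) < #s := by exact_mod_cast hs.card_pos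
  have hjensen := (Real.concaveOn_rpow hα₀ hα₁).le_map_sum (t := s) (w := fun _ => (#s : ℝ)⁻¹)
    (p := f) (fun _ _ => by positivity) (by simp [hcard.ne']) hf
  simp only [smul_eq_mul, ← Finset.mul_sum] at hjensen
  rw [inv_mul_eq_div, inv_mul_eq_div, div_le_iff₀ hcard] at hjensen
  linarith

lemma rpow_add_mul_div_rpow_le {α m N θ x : ℝ} (hα₀ : 0 ≤ α) (hα₁ : α ≤ 1) (hm : 0 < m)
    (hθ : 0 < θ) (hθx : θ ≤ x) (hxN : x ≤ N) (hmean : (N - θ) / m ≤ θ) :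
    x ^ α + m * ((N - x) / m) ^ α ≤ θ ^ α + m * ((N - θ) / m) ^ α := by
  obtain rfl | hθN := (hθx.trans hxN).eq_or_lt
  · rw [le_antisymm hxN hθx]
  set u := (N - θ) / m
  have hu : 0 < u := div_pos (by linarith) hm
  have htan₁ := rpow_le_tangent hθ (hθ.le.trans hθx) hα₀ hα₁
  have htan₂ := rpow_le_tangent hu (div_nonneg (sub_nonneg.2 hxN) hm.le) hα₀ hα₁
  have hslope : θ ^ (α - 1) ≤ u ^ (α - 1) :=
    Real.rpow_le_rpow_of_nonpos hu hmean (by linarith)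
  have hother : m * ((N - x) / m) ^ α ≤ m * u ^ α - α * u ^ (α - 1) * (x - θ) :=
    calc m * ((N - x) / m) ^ α ≤ m * (u ^ α + α * u ^ (α - 1) * ((N - x) / m - u)) :=
          mul_le_mul_of_nonneg_left htan₂ hm.le
      _ = m * u ^ α - α * u ^ (α - 1) * (x - θ) := by simp only [u]; field_simp; ring
  nlinarith [mul_le_mul_of_nonneg_left hslope (mul_nonneg hα₀ (sub_nonneg.2 hθx))]

lemma add_sum_rpow_le {ι : Type*} {s : Finset ι} {f : ι → ℝ} {α N θ x : ℝ}
    (hf : ∀ i ∈ s, 0 ≤ f i) (hα₀ : 0 ≤ α) (hα₁ : α ≤ 1) (hs : s.Nonempty)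
    (hsum : x + ∑ i ∈ s, f i = N) (hθ : 0 < θ) (hθx : θ ≤ x) (hmean : (N - θ) / #s ≤ θ) :
    x ^ α + ∑ i ∈ s, f i ^ α ≤ θ ^ α + #s * ((N - θ) / #s) ^ α := by
  have hxN : x ≤ N := by linarith [sum_nonneg hf]
  calc x ^ α + ∑ i ∈ s, f i ^ α ≤ x ^ α + #s * ((N - x) / #s) ^ α := by
        grw [sum_rpow_le_card_mul_mean_rpow s hf hα₀ hα₁, ← hsum, add_sub_cancel_left]
    _ ≤ θ ^ α + #s * ((N - θ) / #s) ^ α :=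
        rpow_add_mul_div_rpow_le hα₀ hα₁ (by exact_mod_cast hs.card_pos) hθ hθx hxN hmean

lemma mul_div_rpow_eq_rpow_div_rpow_sub_one {m y α : ℝ} (hm : 0 < m) (hy : 0 ≤ y) :
    m * (y / m) ^ α = y ^ α / m ^ (α - 1) := by
  rw [Real.div_rpow hy hm.le, Real.rpow_sub_one hm.ne']
  field_simp

theorem sAlpha_upper_bound {n : ℕ} (hn : 3 ≤ n) (G : SimpleGraph (Fin n)) [DecidableRel G.Adj]
    (hG : G.Connected) (hH : (normLap G).IsHermitian)
    (lam : Fin n → ℝ) (hanti : Antitone lam)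
    (hperm : ∃ σ : Equiv.Perm (Fin n), lam = hH.eigenvalues ∘ σ)
    (hlast : lam ⟨n - 1, by omega⟩ = 0) (hpos : lam ⟨n - 2, by omega⟩ > 0)
    (θ α : ℝ) (hθ1 : lam ⟨0, by omega⟩ ≥ θ) (hθ2 : (n : ℝ) / ((n : ℝ) - 1) ≤ θ)
    (hα1 : 0 < α) (hα2 : α < 1) :
    (∑ i ∈ Finset.univ.filter (fun i : Fin n => (i : ℕ) < n - 1), lam i ^ α) ≤
      θ ^ α + ((n : ℝ) - θ) ^ α / ((n : ℝ) - 2) ^ (α - 1) := by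
  have hsum : ∑ i, lam i = n := by
    obtain ⟨σ, rfl⟩ := hperm
    exact (Equiv.sum_comp σ hH.eigenvalues).trans
      (sum_eigenvalues_normLap (by omega) hG.preconnected hH)
  set first : Fin n := ⟨0, by omega⟩
  set last : Fin n := ⟨n - 1, by omega⟩
  have hfilter : univ.filter (fun i : Fin n => (i : ℕ) < n - 1) = univ.erase last := by
    ext i; simp [Fin.ext_iff, last]; omega
  have hfirst : first ∈ univ.erase last := by simp [Fin.ext_iff, first, last]; omega
  set rest := (univ.erase last).erase first
  have hrest_sum : lam first + ∑ i ∈ rest, lam i = n := by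
    rw [add_sum_erase _ _ hfirst, sum_erase _ hlast, hsum]
  have hrest_card : (#rest : ℝ) = n - 2 := by
    rw [card_erase_of_mem hfirst, card_erase_of_mem (mem_univ _), card_univ, Fintype.card_fin,
      Nat.sub_sub, Nat.cast_sub (by omega)]
    norm_num
  have hrest_nonneg : ∀ i ∈ rest, 0 ≤ lam i := by
    intro i hi
    have hi' : i ≤ ⟨n - 2, by omega⟩ := by
      simp [rest, Fin.ext_iff, Fin.le_def, last] at hi ⊢; omega
    exact hpos.le.trans (hanti hi')
  have hn' : (3 : ℝ) ≤ n := by exact_mod_cast hn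
  have hθ : 0 < θ := lt_of_lt_of_le (div_pos (by linarith) (by linarith)) hθ2
  have hmean : (n - θ) / #rest ≤ θ := by
    rw [hrest_card, div_le_iff₀ (by linarith)]
    rw [div_le_iff₀ (by linarith)] at hθ2
    linarith
  have hrest : rest.Nonempty := card_pos.1 (by rw [← Nat.cast_pos (α := ℝ)]; linarith)
  have hθn : θ ≤ n := by linarith [sum_nonneg hrest_nonneg]
  rw [hfilter, ← add_sum_erase _ _ hfirst,
    ← mul_div_rpow_eq_rpow_div_rpow_sub_one (by linarith) (by linarith), ← hrest_card]
  exact add_sum_rpow_le hrest_nonneg hα1.le hα2.le hrest hrest_sum hθ hθ1 hmean
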